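/- arXiv:1003.2425 — 2 statements merged into one kernel-verified Lean document; each statement's English description precedes it below -/
import Mathlib

section
/- Suppose there exist four pairwise disjoint stationary subsets of ω₁. Then player II has a winning strategy in the game 𝒢. -/
noncomputable section

/-- The first uncountable ordinal. -/
def omega1 : Ordinal := (Cardinal.aleph 1).ord

/-- `C ⊆ ω₁` is club: unbounded in `ω₁` and closed (every limit `α < ω₁` with
`sup (C ∩ α) = α` belongs to `C`). -/
def IsClubOmega1 (C : Set Ordinal) : Prop :=
  C ⊆ Set.Iio omega1 ∧
  (∀ α < omega1, ∃ β ∈ C, α < β) ∧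
  (∀ α < omega1, Order.IsSuccLimit α → sSup (C ∩ Set.Iio α) = α → α ∈ C)

/-- `S ⊆ ω₁` is stationary: it meets every club subset of `ω₁`. -/
def IsStat (S : Set Ordinal) : Prop :=
  S ⊆ Set.Iio omega1 ∧ ∀ C, IsClubOmega1 C → (S ∩ C).Nonempty


/-- The restriction of `f : ω₁ → {0,1}` to the ordinals `≤ α`
(outside its domain the value is `0`). -/
noncomputable def restrictLE (f : Ordinal → Fin 2) (α : Ordinal) : Ordinal → Fin 2 :=
  fun ξ => if ξ ≤ α then f ξ else 0

/-- The restriction of `f : ω₁ → {0,1}` to the ordinals `< α`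
(outside its domain the value is `0`). -/
noncomputable def restrictLT (f : Ordinal → Fin 2) (α : Ordinal) : Ordinal → Fin 2 :=
  fun ξ => if ξ < α then f ξ else 0

/-- The run `(e, a)` of the game `𝒢` is played according to II's strategy `s`:
in round `α`, II's move `a α` is the value of `s` on `α`, I's moves through
round `α`, and II's moves before round `α`. -/
def PlayedByII (s : Ordinal → (Ordinal → Fin 2) → (Ordinal → Fin 2) → Fin 2)
    (e a : Ordinal → Fin 2) : Prop :=
  ∀ α < omega1, a α = s α (restrictLE e α) (restrictLT a α)

/-- Player II wins the run `(e, a)` of `𝒢`: with `E i = e⁻¹ {i}` and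
`A i = a⁻¹ {i}` (as subsets of `ω₁`), either `E 0 ∩ A 0` and `E 0 ∩ A 1` are
both stationary, or `E 1 ∩ A 0` and `E 1 ∩ A 1` are both stationary. -/
def IIWins (e a : Ordinal → Fin 2) : Prop :=
  (IsStat {α | α < omega1 ∧ e α = 0 ∧ a α = 0} ∧
    IsStat {α | α < omega1 ∧ e α = 0 ∧ a α = 1}) ∨
  (IsStat {α | α < omega1 ∧ e α = 1 ∧ a α = 0} ∧
    IsStat {α | α < omega1 ∧ e α = 1 ∧ a α = 1})

/-- `s` is a winning strategy for player II in `𝒢`. -/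
def IIWinning (s : Ordinal → (Ordinal → Fin 2) → (Ordinal → Fin 2) → Fin 2) : Prop :=
  ∀ e a, PlayedByII s e a → IIWins e a

/-! Index four disjoint stationary sets by the four maps `f : Fin 2 → Fin 2`, and let II answer
I's move `i` with `f i` on the set indexed by `f`. If II lost a run, then for each `k` there would
be some `g k` with `E k ∩ A (g k)` nonstationary; but the stationary set indexed by `g` is covered
by these two sets, and the nonstationary subsets of `ω₁` form an ideal. -/

open Set Order Cardinal Function

universe u

theorem isSuccLimit_omega1 : IsSuccLimit omega1 := Cardinal.isSuccLimit_ord (aleph0_le_aleph 1)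

theorem cof_Iio_omega1_ne_aleph0 : Order.cof (Iio omega1) ≠ ℵ₀ := by
  rw [Ordinal.cof_Iio, ← Ordinal.lift_cof, omega1, Cardinal.isRegular_aleph_one.cof_ord]
  simpa using aleph0_lt_aleph_one.ne'

theorem IsLUB.image_val_Iio {α : Type*} [LinearOrder α] {o : α} {d : Set (Iio o)} {a : Iio o}
    (h : IsLUB d a) : IsLUB (Subtype.val '' d) a.1 := by
  refine ⟨?_, fun b hb => ?_⟩
  · rintro _ ⟨x, hx, rfl⟩
    exact h.1 hx
  · rcases lt_or_ge b o with hbo | hbo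
    · exact h.2 (show (⟨b, hbo⟩ : Iio o) ∈ upperBounds d from fun x hx => hb ⟨x, hx, rfl⟩)
    · exact a.2.le.trans hbo

theorem IsClubOmega1.isClub_preimage_val {C : Set Ordinal} (hC : IsClubOmega1 C) :
    IsClub (Subtype.val ⁻¹' C : Set (Iio omega1)) := by
  refine ⟨fun d hdC hd _ a ha => ?_, fun a => ?_⟩
  · have ha' := ha.image_val_Iio
    by_cases had : a.1 ∈ Subtype.val '' d
    · obtain ⟨x, hx, hxa⟩ := had
      exact Subtype.ext hxa ▸ hdC hx
    have hlt : ∀ x ∈ d, x.1 < a.1 :=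
      fun x hx => lt_of_le_of_ne (ha'.1 ⟨x, hx, rfl⟩) fun h => had ⟨x, hx, h⟩
    refine hC.2.2 a.1 a.2 (ha'.isSuccLimit_of_notMem (hd.image _) had) ?_
    refine (ha'.of_subset_of_superset isLUB_Iic ?_ ?_).csSup_eq ?_
    · rintro _ ⟨x, hx, rfl⟩
      exact ⟨hdC hx, hlt x hx⟩
    · exact fun x hx => mem_Iic.2 (le_of_lt hx.2)
    · obtain ⟨x, hx⟩ := hd
      exact ⟨x.1, hdC hx, hlt x hx⟩
  · obtain ⟨b, hbC, hab⟩ := hC.2.1 a.1 a.2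
    exact ⟨⟨b, hC.1 hbC⟩, hbC, hab.le⟩

theorem IsClub.isClubOmega1_image_val {T : Set (Iio omega1)} (hT : IsClub T) :
    IsClubOmega1 (Subtype.val '' T) := by
  refine ⟨image_val_subset, fun α hα => ?_, fun α hα hlim hsup => ?_⟩
  · obtain ⟨b, hbT, hb⟩ := hT.isCofinal ⟨succ α, isSuccLimit_omega1.succ_lt hα⟩
    exact ⟨b, mem_image_of_mem _ hbT, (lt_succ_of_not_isMax (not_isMax α)).trans_le hb⟩
  · set d := T ∩ Subtype.val ⁻¹' Iio α
    have hd : Subtype.val '' d = Subtype.val '' T ∩ Iio α := image_inter_preimage _ _ _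
    have hne : d.Nonempty := by
      refine nonempty_iff_ne_empty.2 fun h => hlim.ne_bot ?_
      rw [← hsup, ← hd, h, image_empty, csSup_empty, bot_eq_zero]
    have hlub : IsLUB (Subtype.val '' d) α := by
      have := isLUB_csSup' ⟨α, fun x (hx : x ∈ Subtype.val '' T ∩ Iio α) => le_of_lt hx.2⟩
      rwa [hsup, ← hd] at this
    have hlub' : IsLUB d ⟨α, hα⟩ :=
      IsLUB.of_image (f := (Subtype.val : Iio omega1 → Ordinal)) Iff.rfl hlub
    exact ⟨_, hT.isLUB_mem inter_subset_left hne hlub', rfl⟩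

theorem isStat_iff_isStationary {S : Set Ordinal} :
    IsStat S ↔ S ⊆ Iio omega1 ∧ IsStationary (Subtype.val ⁻¹' S : Set (Iio omega1)) := by
  refine and_congr_right fun _ => ⟨fun h T hT => ?_, fun h C hC => ?_⟩
  · obtain ⟨_, hxS, x, hxT, rfl⟩ := h _ hT.isClubOmega1_image_val
    exact ⟨x, hxS, hxT⟩
  · obtain ⟨x, hxS, hxC⟩ := h hC.isClub_preimage_val
    exact ⟨x, hxS, hxC⟩

theorem IsStat.mono {S T : Set Ordinal} (hS : IsStat S) (hST : S ⊆ T) (hT : T ⊆ Iio omega1) :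
    IsStat T :=
  ⟨hT, fun C hC => (hS.2 C hC).mono (inter_subset_inter_left C hST)⟩

theorem IsStat.exists_isStat_inter_of_subset_iUnion {ι : Sort*} [Countable ι] {S : Set Ordinal}
    {f : ι → Set Ordinal} (hS : IsStat S) (h : S ⊆ ⋃ i, f i) : ∃ i, IsStat (S ∩ f i) := by
  obtain ⟨hS, hstat⟩ := isStat_iff_isStationary.1 hS
  rw [← inter_eq_left.2 h, inter_iUnion, preimage_iUnion] at hstat
  obtain ⟨i, hi⟩ := (isStationary_iUnion_iff_of_countable cof_Iio_omega1_ne_aleph0).1 hstat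
  exact ⟨i, isStat_iff_isStationary.2 ⟨inter_subset_left.trans hS, hi⟩⟩

theorem exists_forall_of_forall_exists_apply {κ ι : Type*} {R : κ → ι → Prop}
    (h : ∀ f : κ → ι, ∃ k, R k (f k)) : ∃ k, ∀ i, R k i := by
  by_contra! hR
  choose f hf using hR
  obtain ⟨k, hk⟩ := h f
  exact hf k hk

theorem exists_isStat_fibers_of_pairwise_disjoint {ι : Type*} [Nonempty ι]
    {B : ι → Set Ordinal.{u}} (hB : ∀ i, IsStat (B i)) (hdisj : Pairwise (Disjoint on B)) :
    ∃ ρ : Ordinal.{u} → ι, ∀ i, IsStat {α | α < omega1 ∧ ρ α = i} := by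
  classical
  refine ⟨fun α => if h : ∃ i, α ∈ B i then h.choose else Classical.arbitrary ι, fun i => ?_⟩
  refine (hB i).mono (fun α hα => ⟨(hB i).1 hα, ?_⟩) fun α hα => hα.1
  have hex : ∃ j, α ∈ B j := ⟨i, hα⟩
  dsimp only
  rw [dif_pos hex]
  by_contra hne
  exact disjoint_left.1 (hdisj hne) hex.choose_spec hα

def responseStrategy (ρ : Ordinal.{u} → Fin 2 → Fin 2) :
    Ordinal.{u} → (Ordinal.{u} → Fin 2) → (Ordinal.{u} → Fin 2) → Fin 2 :=
  fun α e _ => ρ α (e α)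

theorem PlayedByII.eq_responseStrategy {ρ : Ordinal.{u} → Fin 2 → Fin 2}
    {e a : Ordinal.{u} → Fin 2} (h : PlayedByII (responseStrategy ρ) e a) {α : Ordinal.{u}}
    (hα : α < omega1) : a α = ρ α (e α) := by
  simpa [responseStrategy, restrictLE] using h α hα

theorem iiWinning_responseStrategy {ρ : Ordinal.{u} → Fin 2 → Fin 2}
    (hρ : ∀ f, IsStat {α | α < omega1 ∧ ρ α = f}) : IIWinning (responseStrategy ρ) := by
  intro e a hplay
  set W : Fin 2 → Fin 2 → Set Ordinal.{u} := fun k j => {α | α < omega1 ∧ e α = k ∧ a α = j}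
  have hW : ∀ f : Fin 2 → Fin 2, ∃ k, IsStat (W k (f k)) := by
    intro f
    have hcover : {α | α < omega1 ∧ ρ α = f} ⊆ ⋃ k, {α | e α = k ∧ a α = f k} :=
      fun α ⟨hα, hρα⟩ => mem_iUnion.2 ⟨e α, rfl, hρα ▸ hplay.eq_responseStrategy hα⟩
    obtain ⟨k, hk⟩ := (hρ f).exists_isStat_inter_of_subset_iUnion hcover
    exact ⟨k, hk.mono (fun α ⟨⟨hα, _⟩, hek, hak⟩ => ⟨hα, hek, hak⟩) fun α hα => hα.1⟩
  obtain ⟨k, hk⟩ := exists_forall_of_forall_exists_apply (R := fun k j => IsStat (W k j)) hW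
  fin_cases k
  exacts [Or.inl ⟨hk 0, hk 1⟩, Or.inr ⟨hk 0, hk 1⟩]

/-- If there exist four pairwise disjoint stationary subsets of `ω₁`, then
player II has a winning strategy in the game `𝒢`. -/
theorem II_has_winning_strategy_in_G
    (h : ∃ B : Fin 2 → Fin 2 → Set Ordinal.{0},
      (∀ i j, IsStat (B i j)) ∧
      (∀ i j i' j', (i, j) ≠ (i', j') → Disjoint (B i j) (B i' j'))) :
    ∃ s : Ordinal.{0} → (Ordinal.{0} → Fin 2) → (Ordinal.{0} → Fin 2) → Fin 2,
      IIWinning s := by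
  obtain ⟨B, hstat, hdisj⟩ := h
  let φ : (Fin 2 → Fin 2) ≃ Fin 2 × Fin 2 := Fintype.equivOfCardEq (by simp)
  obtain ⟨ρ, hρ⟩ := exists_isStat_fibers_of_pairwise_disjoint (B := fun f => B (φ f).1 (φ f).2)
    (fun f => hstat _ _) fun f g hfg => hdisj _ _ _ _ (φ.injective.ne hfg)
  exact ⟨responseStrategy ρ, iiWinning_responseStrategy hρ⟩

end
end

section
/- If the principle C_s holds, then Unsplit has no winning strategy in the stationary set splitting game SG. -/
noncomputable section

/-- A run of the stationary set splitting game `SG`, coded by a pair of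
disjoint subsets `A, B` of `ω₁` (the accepted set is `E = A ∪ B`). -/
def SGRun (A B : Set Ordinal) : Prop :=
  A ⊆ Set.Iio omega1 ∧ B ⊆ Set.Iio omega1 ∧ Disjoint A B

/-- Split wins the run `(A, B)` if `A ∪ B` is nonstationary or both `A` and `B`
are stationary. -/
def SplitWins (A B : Set Ordinal) : Prop :=
  ¬ IsStat (A ∪ B) ∨ (IsStat A ∧ IsStat B)

/-- The run `(A, B)` is played according to Split's strategy `τ`
(`true` = put into `A`): for every accepted `α`, `α ∈ A` iff `τ` says so on the
position `(A ∩ α, B ∩ α)`. -/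
def PlayedBySplit (τ : Ordinal → Set Ordinal → Set Ordinal → Bool)
    (A B : Set Ordinal) : Prop :=
  ∀ α ∈ A ∪ B, (α ∈ A ↔ τ α (A ∩ Set.Iio α) (B ∩ Set.Iio α) = true)

/-- `τ` is a winning strategy for Split. -/
def SplitWinning (τ : Ordinal → Set Ordinal → Set Ordinal → Bool) : Prop :=
  ∀ A B, SGRun A B → PlayedBySplit τ A B → SplitWins A B

/-- The run `(A, B)` is played according to Unsplit's strategy `υ`
(`true` = accept): for every `α < ω₁`, `α` is accepted iff `υ` says so on the
position `(A ∩ α, B ∩ α)`. -/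
def PlayedByUnsplit (υ : Ordinal → Set Ordinal → Set Ordinal → Bool)
    (A B : Set Ordinal) : Prop :=
  ∀ α < omega1, (α ∈ A ∪ B ↔ υ α (A ∩ Set.Iio α) (B ∩ Set.Iio α) = true)

/-- `υ` is a winning strategy for Unsplit. -/
def UnsplitWinning (υ : Ordinal → Set Ordinal → Set Ordinal → Bool) : Prop :=
  ∀ A B, SGRun A B → PlayedByUnsplit υ A B → ¬ SplitWins A B

/-- A set of ordinals has order type `ω`. -/
def OTypeOmega (s : Set Ordinal) : Prop :=
  Ordinal.type ((· < ·) : s → s → Prop) = Ordinal.omega0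

/-- The family `⟨a α β : β < γ α⟩` (for `α < ω₁` limit) witnesses `C_s`:
each `a α β` is a cofinal subset of `α` of order type `ω`; the family is
`⊆`-decreasing mod finite in `β`; and for every club `C` and stationary `E`
some `a α β` with `α ∈ E` has `a α β \ C` finite and `a α β ∩ E` infinite. -/
def CsWitness (γ : Ordinal → Ordinal) (a : Ordinal → Ordinal → Set Ordinal) : Prop :=
  (∀ α, α < omega1 → Order.IsSuccLimit α →
    γ α < omega1 ∧
    ∀ β < γ α, a α β ⊆ Set.Iio α ∧ (∀ ξ < α, ∃ η ∈ a α β, ξ < η) ∧ OTypeOmega (a α β)) ∧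
  (∀ α, α < omega1 → Order.IsSuccLimit α → ∀ β β', β < β' → β' < γ α → (a α β' \ a α β).Finite) ∧
  (∀ C E : Set Ordinal, IsClubOmega1 C → IsStat E →
    ∃ α β, α < omega1 ∧ Order.IsSuccLimit α ∧ α ∈ E ∧ β < γ α ∧
      (a α β \ C).Finite ∧ (a α β ∩ E).Infinite)

/-- The principle `C_s`. -/
def Cs : Prop :=
  ∃ (γ : Ordinal.{0} → Ordinal.{0}) (a : Ordinal.{0} → Ordinal.{0} → Set Ordinal.{0}), CsWitness γ a

/-- The sequence `⟨σ α : α < ω₁⟩` witnesses `D_u`: it is a `◊`-sequence, and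
for every `E ⊆ ω₁` there is a club `C` such that either every `α ∈ C` guessing
`E` lies in `E`, or every `α ∈ C` guessing `E` lies outside `E`. -/
def DuWitness (σ : Ordinal → Set Ordinal) : Prop :=
  (∀ α < omega1, σ α ⊆ Set.Iio α) ∧
  (∀ A : Set Ordinal, A ⊆ Set.Iio omega1 →
    IsStat {α | α < omega1 ∧ A ∩ Set.Iio α = σ α}) ∧
  (∀ E : Set Ordinal, E ⊆ Set.Iio omega1 →
    ∃ C, IsClubOmega1 C ∧
      ((∀ α ∈ C, E ∩ Set.Iio α = σ α → α ∈ E) ∨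
       (∀ α ∈ C, E ∩ Set.Iio α = σ α → α ∉ E)))

/-- The principle `D_u`. -/
def Du : Prop := ∃ σ : Ordinal.{0} → Set Ordinal.{0}, DuWitness σ

/-! Under `C_s` Split has a winning strategy, and playing it against any strategy of Unsplit
produces a run that Unsplit loses. Split puts an accepted limit `α` into `B` iff every `a α β` that
has so far met `B` infinitely often has also met `A` infinitely often.
If `A` were stationary and `B` not, `C_s` would give `α ∈ A` and some `a α β'` almost contained in a
club missing `B` and meeting `A` infinitely; since `α` went into `A`, some `a α β` meets `B`
infinitely and `A` finitely, which contradicts that the `a α β` are almost decreasing in `β`.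
If `A` were nonstationary and `A ∪ B` stationary, then `B` is stationary, and `C_s` gives `α ∈ B`
and some `a α β` almost contained in a club missing `A` and meeting `B` infinitely, against the rule
that put `α` into `B`. -/

open Set

universe u

lemma iSup_lt_omega1 {f : ℕ → Ordinal.{u}} (hf : ∀ n, f n < omega1) : ⨆ n, f n < omega1 := by
  rw [omega1, Cardinal.ord_aleph] at *
  exact Ordinal.iSup_lt_omega_one hf

lemma Set.Finite.inter_of_diff {α : Type*} {s t X : Set α} (hst : (s \ t).Finite)
    (ht : (t ∩ X).Finite) : (s ∩ X).Finite :=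
  (hst.union ht).subset fun x ⟨hs, hX⟩ => by by_cases hx : x ∈ t <;> simp_all

def nextAbove (C : Set Ordinal) (x : Ordinal) : Ordinal := sInf {y | y ∈ C ∧ x < y}

namespace IsClubOmega1

variable {C D : Set Ordinal.{u}}

lemma nextAbove_mem (hC : IsClubOmega1 C) {x : Ordinal} (hx : x < omega1) :
    nextAbove C x ∈ C ∧ x < nextAbove C x :=
  csInf_mem (hC.2.1 x hx)

lemma mem_of_forall_lt_exists_mem (hC : IsClubOmega1 C) {δ : Ordinal} (hδ : δ < omega1)
    (hδ₀ : 0 < δ) (hcof : ∀ ξ < δ, ∃ η ∈ C, ξ < η ∧ η < δ) : δ ∈ C := by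
  have hlim : Order.IsSuccLimit δ :=
    ⟨not_isMin_of_lt hδ₀, fun ξ hξ =>
      let ⟨_, _, hξη, hηδ⟩ := hcof ξ hξ.lt
      hξ.2 hξη hηδ⟩
  refine hC.2.2 δ hδ hlim (le_antisymm (csSup_le' fun x hx => hx.2.le) ?_)
  refine le_of_forall_lt fun ξ hξ => ?_
  obtain ⟨η, hηC, hξη, hηδ⟩ := hcof ξ hξ
  exact hξη.trans_le (le_csSup ⟨δ, fun x hx => hx.2.le⟩ ⟨hηC, hηδ⟩)

lemma exists_inter_mem_gt (hC : IsClubOmega1 C) (hD : IsClubOmega1 D) {α : Ordinal}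
    (hα : α < omega1) : ∃ δ ∈ C ∩ D, α < δ := by
  set g : Ordinal → Ordinal := fun x => nextAbove D (nextAbove C x)
  have hg : ∀ {x}, x < omega1 →
      nextAbove C x ∈ C ∧ x < nextAbove C x ∧ g x ∈ D ∧ nextAbove C x < g x := fun hx =>
    have hCx := hC.nextAbove_mem hx
    ⟨hCx.1, hCx.2, hD.nextAbove_mem (hC.1 hCx.1)⟩
  have hsucc : ∀ n, g^[n + 1] α = g (g^[n] α) := fun n => Function.iterate_succ_apply' g n α
  have hs : ∀ n, g^[n] α < omega1 := fun n => by
    induction n with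
    | zero => exact hα
    | succ n ih => exact hsucc n ▸ hD.1 (hg ih).2.2.1
  -- `δ` is the limit of `α < c₀ < d₀ < c₁ < d₁ < ⋯` with `cₙ ∈ C` and `dₙ ∈ D`
  set δ := ⨆ n, g^[n] α
  have hle : ∀ n, g^[n] α ≤ δ := Ordinal.le_iSup _
  have hlt : ∀ n, g^[n] α < δ := fun n =>
    ((hg (hs n)).2.1.trans (hg (hs n)).2.2.2).trans_le (hsucc n ▸ hle (n + 1))
  have hδ : δ < omega1 := iSup_lt_omega1 hs
  have hδ₀ : 0 < δ := zero_le.trans_lt (hlt 0)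
  refine ⟨δ, ⟨hC.mem_of_forall_lt_exists_mem hδ hδ₀ fun ξ hξ => ?_,
    hD.mem_of_forall_lt_exists_mem hδ hδ₀ fun ξ hξ => ?_⟩, hlt 0⟩ <;>
  obtain ⟨n, hn⟩ := Ordinal.lt_iSup_iff.1 hξ <;>
  obtain ⟨hnC, hn₁, hnD, hn₂⟩ := hg (hs n)
  · exact ⟨_, hnC, hn.trans hn₁, hn₂.trans_le (hsucc n ▸ hle (n + 1))⟩
  · exact ⟨_, hnD, hn.trans (hn₁.trans hn₂), hsucc n ▸ hlt (n + 1)⟩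

protected lemma inter (hC : IsClubOmega1 C) (hD : IsClubOmega1 D) : IsClubOmega1 (C ∩ D) := by
  refine ⟨fun x hx => hC.1 hx.1, fun α hα => hC.exists_inter_mem_gt hD hα,
    fun α hα hlim hsup => ?_⟩
  have hcof : ∀ ξ < α, ∃ η ∈ C ∩ D, ξ < η ∧ η < α := fun ξ hξ => by
    obtain ⟨η, ⟨hη, hηα⟩, hξη⟩ := exists_lt_of_lt_csSup' (hsup.symm ▸ hξ)
    exact ⟨η, hη, hξη, hηα⟩
  exact ⟨hC.mem_of_forall_lt_exists_mem hα hlim.bot_lt fun ξ hξ =>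
      let ⟨η, hη, h⟩ := hcof ξ hξ; ⟨η, hη.1, h⟩,
    hD.mem_of_forall_lt_exists_mem hα hlim.bot_lt fun ξ hξ =>
      let ⟨η, hη, h⟩ := hcof ξ hξ; ⟨η, hη.2, h⟩⟩

end IsClubOmega1

lemma exists_isClubOmega1_disjoint_of_not_isStat {S : Set Ordinal.{u}} (hS : S ⊆ Iio omega1)
    (h : ¬IsStat S) : ∃ C, IsClubOmega1 C ∧ Disjoint S C := by
  simpa [IsStat, hS, not_nonempty_iff_eq_empty, disjoint_iff_inter_eq_empty] using h

lemma IsStat.right_of_union {A B : Set Ordinal.{u}} (h : IsStat (A ∪ B)) (hA : ¬IsStat A) :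
    IsStat B := by
  obtain ⟨C₀, hC₀, hAC₀⟩ :=
    exists_isClubOmega1_disjoint_of_not_isStat (subset_union_left.trans h.1) hA
  refine ⟨subset_union_right.trans h.1, fun C hC => ?_⟩
  obtain ⟨x, hxAB, hxC, hxC₀⟩ := h.2 _ (hC.inter hC₀)
  exact ⟨x, hxAB.resolve_left fun hxA => hAC₀.notMem_of_mem_left hxA hxC₀, hxC⟩

section Game

variable (υ τ : Ordinal.{u} → Set Ordinal.{u} → Set Ordinal.{u} → Bool)

/-- The outcome of round `α` when `υ` plays against `τ`: `none` if `α` is rejected, otherwise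
`some b` where `b` is `τ`'s answer (`true` = put into `A`). -/
def play (α : Ordinal.{u}) : Option Bool :=
  let A := {ξ | ∃ _ : ξ < α, play ξ = some true}
  let B := {ξ | ∃ _ : ξ < α, play ξ = some false}
  if υ α A B then some (τ α A B) else none
termination_by α

def playLeft : Set Ordinal.{u} := {ξ | ξ < omega1 ∧ play υ τ ξ = some true}

def playRight : Set Ordinal.{u} := {ξ | ξ < omega1 ∧ play υ τ ξ = some false}

variable {υ τ}

lemma play_of_lt_omega1 {α : Ordinal.{u}} (hα : α < omega1) :
    play υ τ α =
      let A := playLeft υ τ ∩ Iio α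
      let B := playRight υ τ ∩ Iio α
      if υ α A B then some (τ α A B) else none := by
  have h : ∀ b, {ξ | ∃ _ : ξ < α, play υ τ ξ = some b} =
      {ξ | ξ < omega1 ∧ play υ τ ξ = some b} ∩ Iio α := fun b => by
    ext ξ
    simp only [mem_ofPred_eq, mem_inter_iff, mem_Iio, exists_prop]
    exact ⟨fun ⟨hξ, h⟩ => ⟨⟨hξ.trans hα, h⟩, hξ⟩, fun ⟨⟨_, h⟩, hξ⟩ => ⟨hξ, h⟩⟩
  rw [play, h, h]
  rfl

variable (υ τ)

lemma exists_run_playedByUnsplit_playedBySplit :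
    ∃ A B, SGRun A B ∧ PlayedByUnsplit υ A B ∧ PlayedBySplit τ A B := by
  refine ⟨playLeft υ τ, playRight υ τ,
    ⟨fun _ h => h.1, fun _ h => h.1, disjoint_left.2 fun ξ hA hB => by simpa [hA.2] using hB.2⟩,
    fun α hα => ?_, fun α hα => ?_⟩
  · have := play_of_lt_omega1 (υ := υ) (τ := τ) hα
    cases h : υ α (playLeft υ τ ∩ Iio α) (playRight υ τ ∩ Iio α) <;>
    simp_all [playLeft, playRight]
  · have hα' : α < omega1 := by rcases hα with h | h <;> exact h.1
    have := play_of_lt_omega1 (υ := υ) (τ := τ) hα'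
    cases h : υ α (playLeft υ τ ∩ Iio α) (playRight υ τ ∩ Iio α) <;>
    simp_all [playLeft, playRight]

end Game

lemma SplitWinning.not_unsplitWinning
    {υ τ : Ordinal.{u} → Set Ordinal.{u} → Set Ordinal.{u} → Bool} (hτ : SplitWinning τ) :
    ¬UnsplitWinning υ := fun hυ =>
  let ⟨A, B, hrun, hυAB, hτAB⟩ := exists_run_playedByUnsplit_playedBySplit υ τ
  hυ A B hrun hυAB (hτ A B hrun hτAB)

open Classical in
def csSplit (γ : Ordinal → Ordinal) (a : Ordinal → Ordinal → Set Ordinal)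
    (α : Ordinal) (A B : Set Ordinal) : Bool :=
  !decide (Order.IsSuccLimit α ∧ ∀ β < γ α, (a α β ∩ B).Infinite → (a α β ∩ A).Infinite)

namespace CsWitness

variable {γ : Ordinal.{u} → Ordinal.{u}} {a : Ordinal.{u} → Ordinal.{u} → Set Ordinal.{u}}
  {α β : Ordinal.{u}} {A B : Set Ordinal.{u}}

lemma inter_inter_Iio (hCs : CsWitness γ a) (hα : α < omega1) (hlim : Order.IsSuccLimit α)
    (hβ : β < γ α) (X : Set Ordinal) : a α β ∩ (X ∩ Iio α) = a α β ∩ X := by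
  rw [inter_left_comm, inter_eq_left.2 ((hCs.1 α hα hlim).2 β hβ).1, inter_comm]

lemma finite_inter_of_le (hCs : CsWitness γ a) {β' : Ordinal} (hα : α < omega1)
    (hlim : Order.IsSuccLimit α) (hββ' : β ≤ β') (hβ' : β' < γ α) {X : Set Ordinal}
    (hX : (a α β ∩ X).Finite) :
    (a α β' ∩ X).Finite := by
  rcases hββ'.lt_or_eq with hlt | rfl
  · exact (hCs.2.1 α hα hlim β β' hlt hβ').inter_of_diff hX
  · exact hX

lemma exists_infinite_inter_right_of_mem_left (hCs : CsWitness γ a)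
    (hplay : PlayedBySplit (csSplit γ a) A B) (hα : α < omega1) (hlim : Order.IsSuccLimit α)
    (hαA : α ∈ A) :
    ∃ β < γ α, (a α β ∩ B).Infinite ∧ (a α β ∩ A).Finite := by
  have := (hplay α (Or.inl hαA)).1 hαA
  simp only [csSplit, Bool.not_eq_true', decide_eq_false_iff_not, not_and, not_forall,
    Set.not_infinite] at this
  obtain ⟨β, hβ, hB, hA⟩ := this hlim
  rw [hCs.inter_inter_Iio hα hlim hβ] at hB hA
  exact ⟨β, hβ, hB, hA⟩

lemma infinite_inter_left_of_mem_right (hCs : CsWitness γ a)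
    (hplay : PlayedBySplit (csSplit γ a) A B) (hAB : Disjoint A B) (hα : α < omega1)
    (hαB : α ∈ B) (hβ : β < γ α) (hB : (a α β ∩ B).Infinite) : (a α β ∩ A).Infinite := by
  have hrule : Order.IsSuccLimit α ∧ ∀ β < γ α,
      (a α β ∩ (B ∩ Iio α)).Infinite → (a α β ∩ (A ∩ Iio α)).Infinite := by
    simpa [csSplit] using mt (hplay α (Or.inr hαB)).2 (disjoint_right.1 hAB hαB)
  have h := hrule.2 β hβ
  rw [hCs.inter_inter_Iio hα hrule.1 hβ, hCs.inter_inter_Iio hα hrule.1 hβ] at h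
  exact h hB

lemma isStat_right_of_isStat_left (hCs : CsWitness γ a)
    (hplay : PlayedBySplit (csSplit γ a) A B) (hrun : SGRun A B) (hA : IsStat A) : IsStat B := by
  by_contra hB
  obtain ⟨C, hC, hBC⟩ := exists_isClubOmega1_disjoint_of_not_isStat hrun.2.1 hB
  obtain ⟨α, β', hα, hlim, hαA, hβ', hβ'C, hβ'A⟩ := hCs.2.2 C A hC hA
  obtain ⟨β, hβ, hβB, hβA⟩ := hCs.exists_infinite_inter_right_of_mem_left hplay hα hlim hαA
  have hβ'B : (a α β' ∩ B).Finite := hβ'C.inter_of_diff (by simp [hBC.symm.inter_eq])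
  -- `a α β'` and `a α β` are comparable under almost inclusion
  rcases le_or_gt β β' with hle | hlt
  · exact hβ'A (hCs.finite_inter_of_le hα hlim hle hβ' hβA)
  · exact hβB (hCs.finite_inter_of_le hα hlim hlt.le hβ hβ'B)

lemma not_isStat_right_of_not_isStat_left (hCs : CsWitness γ a)
    (hplay : PlayedBySplit (csSplit γ a) A B) (hrun : SGRun A B) (hA : ¬IsStat A) : ¬IsStat B := by
  intro hB
  obtain ⟨C, hC, hAC⟩ := exists_isClubOmega1_disjoint_of_not_isStat hrun.1 hA
  obtain ⟨α, β, hα, -, hαB, hβ, hβC, hβB⟩ := hCs.2.2 C B hC hB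
  exact hCs.infinite_inter_left_of_mem_right hplay hrun.2.2 hα hαB hβ hβB
    (hβC.inter_of_diff (by simp [hAC.symm.inter_eq]))

lemma splitWinning_csSplit (hCs : CsWitness γ a) : SplitWinning (csSplit γ a) := by
  intro A B hrun hplay
  by_cases hA : IsStat A
  · exact Or.inr ⟨hA, hCs.isStat_right_of_isStat_left hplay hrun hA⟩
  · exact Or.inl fun hAB =>
      hCs.not_isStat_right_of_not_isStat_left hplay hrun hA (hAB.right_of_union hA)

end CsWitness

/-- If the principle `C_s` holds, then Unsplit has no winning strategy in the
stationary set splitting game `SG`. -/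
theorem cs_implies_unsplit_has_no_winning_strategy (h : Cs) :
    ¬ ∃ υ : Ordinal.{0} → Set Ordinal.{0} → Set Ordinal.{0} → Bool, UnsplitWinning υ := by
  obtain ⟨γ, a, hCs⟩ := h
  rintro ⟨υ, hυ⟩
  exact hCs.splitWinning_csSplit.not_unsplitWinning hυ

end
end
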